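/- Converse direction used in Proposition 3: with U = F/⟨R⟩ and φ̃ : F → C satisfying φ̃(1)=1, φ̃(xy)=(ξ̃_{x₍₁₎}·φ̃(y))·φ̃(x₍₂₎), and (π⊗φ̃)∘Δ̃(R)=0, the associated F-module action x·f := (ξ̃_{x₍₁₎}·f)·φ̃(x₍₂₎) satisfies x·f = 0 for all x ∈ ⟨R⟩ and f ∈ C; consequently the action factors through U and the induced U-action on C satisfies the generalized Leibniz rule u·(fg) = (ξ_{u₍₁₎}·f)(u₍₂₎·g). -/

import Mathlib

open TensorProduct


/-- The "Sweedler" map `x ↦ A(x₍₁₎) * B(x₍₂₎)`. -/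
noncomputable def sw {R U C : Type*} [CommRing R] [Ring U] [Bialgebra R U]
    [Ring C] [Algebra R C] (A B : U →ₗ[R] C) : U →ₗ[R] C :=
  LinearMap.mul' R C ∘ₗ TensorProduct.map A B ∘ₗ Coalgebra.comul

/-- `actOn ξ f : x ↦ ξ_x · f`. -/
noncomputable def actOn {R U C : Type*} [CommRing R] [Ring U] [Algebra R U]
    [Ring C] [Algebra R C] (ξ : U →ₗ[R] Module.End R C) (f : C) : U →ₗ[R] C :=
  LinearMap.applyₗ f ∘ₗ ξ


/-- `x ↦ A(x₍₁₎) * B(x₍₂₎)` with respect to an explicitly given comultiplication `Δ`. -/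
noncomputable def swF {F C : Type*} [Ring F] [Algebra ℂ F] [Ring C] [Algebra ℂ C]
    (Δ : F →ₗ[ℂ] F ⊗[ℂ] F) (A B : F →ₗ[ℂ] C) : F →ₗ[ℂ] C :=
  LinearMap.mul' ℂ C ∘ₗ TensorProduct.map A B ∘ₗ Δ

/-- `actOnF ξ f : x ↦ ξ_x · f`. -/
noncomputable def actOnF {F C : Type*} [Ring F] [Algebra ℂ F] [Ring C] [Algebra ℂ C]
    (ξ : F →ₗ[ℂ] Module.End ℂ C) (f : C) : F →ₗ[ℂ] C :=
  LinearMap.applyₗ f ∘ₗ ξ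

/-!
Write `x·f = ∑ ξ_{π x₍₁₎}(f) φ̃(x₍₂₎)` as `(π ⊗ φ̃)(Δ x)` followed by `u ⊗ c ↦ ξ_u(f) c`.
Then the vanishing hypothesis gives `φ̃(r b) = 0` for `r ∈ S`, and twisted multiplicativity
gives `φ̃(a r b) = 0`, so `φ̃ = ψ ∘ π` for some linear `ψ` on `U`. As `π` intertwines the
comultiplications, `x·f` is the convolution `(ξ_(·)(f) ⋆ ψ)(π x)`, which kills `ker π = ⟨S⟩`.
The Leibniz rule for `u·f := (ξ_(·)(f) ⋆ ψ)(u)` follows from that of `ξ` and associativity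
of convolution.
-/

open LinearMap

theorem LinearMap.exists_comp_eq_of_ker_le {R M N P : Type*} [CommRing R]
    [AddCommGroup M] [Module R M] [AddCommGroup N] [Module R N] [AddCommGroup P] [Module R P]
    {p : M →ₗ[R] N} (hp : Function.Surjective p) {φ : M →ₗ[R] P} (h : ker p ≤ ker φ) :
    ∃ ψ : N →ₗ[R] P, ψ ∘ₗ p = φ :=
  ⟨(ker p).liftQ φ h ∘ₗ (p.quotKerEquivOfSurjective hp).symm.toLinearMap, by
    ext x
    simp [quotKerEquivOfSurjective_symm_apply]⟩

section Sweedler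

variable {F U C : Type*} [Ring F] [Algebra ℂ F] [Ring C] [Algebra ℂ C]
  [AddCommGroup U] [Module ℂ U] (Δ : F →ₗ[ℂ] F ⊗[ℂ] F)

theorem swF_zero_left (B : F →ₗ[ℂ] C) : swF Δ 0 B = 0 := by
  simp [swF]

theorem actOnF_zero (ξ : F →ₗ[ℂ] Module.End ℂ C) : actOnF ξ 0 = 0 := by
  ext; simp [actOnF]

theorem swF_comp_left (p : F →ₗ[ℂ] U) (A : U →ₗ[ℂ] C) (B : F →ₗ[ℂ] C) :
    swF Δ (A ∘ₗ p) B = mul' ℂ C ∘ₗ map A id ∘ₗ map p B ∘ₗ Δ := by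
  simp only [swF, ← comp_assoc, ← map_comp, id_comp]

theorem swF_comp_left_apply_eq_zero (p : F →ₗ[ℂ] U) (A : U →ₗ[ℂ] C) (B : F →ₗ[ℂ] C) {x : F}
    (hx : map p B (Δ x) = 0) : swF Δ (A ∘ₗ p) B x = 0 := by
  simp [swF_comp_left, hx]

theorem span_le_ker_of_twisted_mul (p : F →ₗ[ℂ] U) (ξ : U →ₗ[ℂ] Module.End ℂ C)
    (φ : F →ₗ[ℂ] C) (hmul : ∀ x y, φ (x * y) = swF Δ (actOnF (ξ ∘ₗ p) (φ y)) φ x)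
    {S : Set F} (hS : ∀ r ∈ S, map p φ (Δ r) = 0) :
    Submodule.span ℂ {x | ∃ a, ∃ r ∈ S, ∃ b, x = a * r * b} ≤ ker φ := by
  rw [Submodule.span_le]
  rintro _ ⟨a, r, hr, b, rfl⟩
  have hrb : φ (r * b) = 0 := by
    rw [hmul]
    exact swF_comp_left_apply_eq_zero Δ p (applyₗ (φ b) ∘ₗ ξ) φ (hS r hr)
  rw [SetLike.mem_coe, mem_ker, mul_assoc, hmul, hrb, actOnF_zero, swF_zero_left,
    LinearMap.zero_apply]

end Sweedler

theorem swF_comp_comp {F U C : Type*} [Ring F] [Algebra ℂ F] [Ring U] [Bialgebra ℂ U]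
    [Ring C] [Algebra ℂ C] {Δ : F →ₗ[ℂ] F ⊗[ℂ] F} {p : F →ₗ[ℂ] U}
    (hp : ∀ x, Coalgebra.comul (R := ℂ) (p x) = map p p (Δ x)) (A B : U →ₗ[ℂ] C) :
    swF Δ (A ∘ₗ p) (B ∘ₗ p) = sw A B ∘ₗ p := by
  ext x
  simp [swF, sw, map_comp, hp]

section TwistedAction

variable {R U C : Type*} [CommRing R] [Ring U] [Bialgebra R U] [Ring C] [Algebra R C]

theorem sw_assoc (A B D : U →ₗ[R] C) : sw (sw A B) D = sw A (sw B D) :=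
  congrArg WithConv.ofConv (mul_assoc (WithConv.toConv A) (WithConv.toConv B) (WithConv.toConv D))

variable (ξ : U →ₗ[R] Module.End R C)

theorem actOn_add (f g : C) : actOn ξ (f + g) = actOn ξ f + actOn ξ g := by
  ext; simp [actOn]

theorem actOn_smul (c : R) (f : C) : actOn ξ (c • f) = c • actOn ξ f := by
  ext; simp [actOn]

noncomputable def twistedAction (ψ : U →ₗ[R] C) : U →ₗ[R] Module.End R C :=
  mk₂ R (fun u f => sw (actOn ξ f) ψ u)
    (by simp)
    (by simp)
    (by simp [actOn_add, sw, map_add_left])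
    (by simp [actOn_smul, sw, map_smul_left])

theorem actOn_twistedAction (ψ : U →ₗ[R] C) (f : C) :
    actOn (twistedAction ξ ψ) f = sw (actOn ξ f) ψ :=
  rfl

theorem twistedAction_mul
    (hleib : ∀ (x : U) (f g : C), ξ x (f * g) = sw (actOn ξ f) (actOn ξ g) x)
    (ψ : U →ₗ[R] C) (u : U) (f g : C) :
    twistedAction ξ ψ u (f * g) = sw (actOn ξ f) (actOn (twistedAction ξ ψ) g) u := by
  have hmul : actOn ξ (f * g) = sw (actOn ξ f) (actOn ξ g) := LinearMap.ext fun x => hleib x f g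
  rw [actOn_twistedAction, ← sw_assoc, ← hmul]
  rfl

end TwistedAction

theorem prop3_action_factorization_general {M U C : Type*} [Ring U] [Bialgebra ℂ U]
    [Ring C] [Algebra ℂ C]
    (Δ : FreeAlgebra ℂ M →ₐ[ℂ] FreeAlgebra ℂ M ⊗[ℂ] FreeAlgebra ℂ M)
    (S : Set (FreeAlgebra ℂ M))
    (π : FreeAlgebra ℂ M →ₐ[ℂ] U)
    (hπsurj : Function.Surjective π)
    (hker : ∀ x : FreeAlgebra ℂ M, π x = 0 ↔
      x ∈ Submodule.span ℂ {x : FreeAlgebra ℂ M |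
        ∃ a : FreeAlgebra ℂ M, ∃ r ∈ S, ∃ b : FreeAlgebra ℂ M, x = a * r * b})
    (hπcomul : ∀ x : FreeAlgebra ℂ M,
      Coalgebra.comul (R := ℂ) (π x) =
        (TensorProduct.map π.toLinearMap π.toLinearMap) (Δ x))
    (ξ : U →ₗ[ℂ] Module.End ℂ C)
    (hξleib : ∀ (x : U) (f g : C), ξ x (f * g) = sw (actOn ξ f) (actOn ξ g) x)
    (φt : FreeAlgebra ℂ M →ₗ[ℂ] C)
    (hφtmul : ∀ x y : FreeAlgebra ℂ M,
      φt (x * y) =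
        swF Δ.toLinearMap (actOnF (ξ ∘ₗ π.toLinearMap) (φt y)) φt x)
    (hvanish : ∀ r ∈ S, (TensorProduct.map π.toLinearMap φt) (Δ r) = 0) :
    (∀ x ∈ Submodule.span ℂ {x : FreeAlgebra ℂ M |
        ∃ a : FreeAlgebra ℂ M, ∃ r ∈ S, ∃ b : FreeAlgebra ℂ M, x = a * r * b},
      ∀ f : C, swF Δ.toLinearMap (actOnF (ξ ∘ₗ π.toLinearMap) f) φt x = 0) ∧
    (∃ act : U →ₗ[ℂ] Module.End ℂ C,
      (∀ (x : FreeAlgebra ℂ M) (f : C),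
        act (π x) f = swF Δ.toLinearMap (actOnF (ξ ∘ₗ π.toLinearMap) f) φt x) ∧
      (∀ (u : U) (f g : C),
        act u (f * g) = sw (actOn ξ f) (actOn act g) u)) := by
  have hφt : ker π.toLinearMap ≤ ker φt := fun x hx =>
    span_le_ker_of_twisted_mul Δ.toLinearMap π.toLinearMap ξ φt hφtmul hvanish ((hker x).1 hx)
  obtain ⟨ψ, hψ⟩ := exists_comp_eq_of_ker_le hπsurj hφt
  have hfactor (f : C) : swF Δ.toLinearMap (actOnF (ξ ∘ₗ π.toLinearMap) f) φt =
      sw (actOn ξ f) ψ ∘ₗ π.toLinearMap := by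
    rw [← hψ]
    exact swF_comp_comp hπcomul (actOn ξ f) ψ
  refine ⟨fun x hx f => ?_, twistedAction ξ ψ, fun x f => ?_, twistedAction_mul ξ hξleib ψ⟩
  · rw [hfactor, comp_apply, AlgHom.toLinearMap_apply, (hker x).2 hx, map_zero]
  · rw [hfactor]
    rfl

/-- The modified `F`-action `x·f := (ξ̃_{x₍₁₎}·f)·φ̃(x₍₂₎)` kills the ideal `⟨R⟩`,
hence factors through `U = F/⟨R⟩`, and the induced `U`-action satisfies the
generalized Leibniz rule. -/
theorem prop3_action_factorization {M U C : Type*} [Ring U] [Bialgebra ℂ U]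
    [Ring C] [Algebra ℂ C]
    (Δ : FreeAlgebra ℂ M →ₐ[ℂ] FreeAlgebra ℂ M ⊗[ℂ] FreeAlgebra ℂ M)
    (ε : FreeAlgebra ℂ M →ₐ[ℂ] ℂ)
    (S : Set (FreeAlgebra ℂ M))
    (π : FreeAlgebra ℂ M →ₐ[ℂ] U)
    (hπsurj : Function.Surjective π)
    (hker : ∀ x : FreeAlgebra ℂ M, π x = 0 ↔
      x ∈ Submodule.span ℂ {x : FreeAlgebra ℂ M |
        ∃ a : FreeAlgebra ℂ M, ∃ r ∈ S, ∃ b : FreeAlgebra ℂ M, x = a * r * b})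
    (hπcomul : ∀ x : FreeAlgebra ℂ M,
      Coalgebra.comul (R := ℂ) (π x) =
        (TensorProduct.map π.toLinearMap π.toLinearMap) (Δ x))
    (hπcounit : ∀ x : FreeAlgebra ℂ M,
      Coalgebra.counit (R := ℂ) (π x) = ε x)
    (ξ : U →ₗ[ℂ] Module.End ℂ C)
    (hξone : ξ 1 = LinearMap.id)
    (hξmul : ∀ x y : U, ξ (x * y) = ξ x ∘ₗ ξ y)
    (hξunit : ∀ x : U, ξ x 1 = Coalgebra.counit (R := ℂ) x • (1 : C))
    (hξleib : ∀ (x : U) (f g : C), ξ x (f * g) = sw (actOn ξ f) (actOn ξ g) x)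
    (φt : FreeAlgebra ℂ M →ₗ[ℂ] C)
    (hφtone : φt 1 = 1)
    (hφtmul : ∀ x y : FreeAlgebra ℂ M,
      φt (x * y) =
        swF Δ.toLinearMap (actOnF (ξ ∘ₗ π.toLinearMap) (φt y)) φt x)
    (hvanish : ∀ r ∈ S, (TensorProduct.map π.toLinearMap φt) (Δ r) = 0) :
    (∀ x ∈ Submodule.span ℂ {x : FreeAlgebra ℂ M |
        ∃ a : FreeAlgebra ℂ M, ∃ r ∈ S, ∃ b : FreeAlgebra ℂ M, x = a * r * b},
      ∀ f : C, swF Δ.toLinearMap (actOnF (ξ ∘ₗ π.toLinearMap) f) φt x = 0) ∧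
    (∃ act : U →ₗ[ℂ] Module.End ℂ C,
      (∀ (x : FreeAlgebra ℂ M) (f : C),
        act (π x) f = swF Δ.toLinearMap (actOnF (ξ ∘ₗ π.toLinearMap) f) φt x) ∧
      (∀ (u : U) (f g : C),
        act u (f * g) = sw (actOn ξ f) (actOn act g) u)) :=
  prop3_action_factorization_general Δ S π hπsurj hker hπcomul ξ hξleib φt hφtmul hvanish
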